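/- Let τ > 0, G ∈ B_c, 0 < t < τ, and u(x,t) = −∫_ℝ G(ξ) ∂/∂ξ [ e^{ξ²/(4τ)} Θ_t(x−ξ) ] dξ. Then for every x ∈ ℝ, |u(x,t)| ≤ ‖G‖'_∞ e^{x²/(4(τ−t))} / (2√(πt)), and moreover u(x,t) e^{−x²/(4(τ−t))} → 0 as |x| → ∞. -/

import Mathlib

open MeasureTheory Filter Topology

/-- The Gauss–Weierstrass heat kernel `Θ_t(x) = (4πt)^(−1/2) exp(−x²/(4t))` for `t > 0`. -/
noncomputable def heatK (t x : ℝ) : ℝ :=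
  (Real.sqrt (4 * Real.pi * t))⁻¹ * Real.exp (-x ^ 2 / (4 * t))

/-- `G ∈ B_c`: continuous, vanishing at `−∞`, with a finite limit at `+∞`. -/
def memBc (G : ℝ → ℝ) : Prop :=
  Continuous G ∧ Tendsto G atBot (nhds (0 : ℝ)) ∧ ∃ L : ℝ, Tendsto G atTop (nhds L)

/-- `‖G‖'_∞ = sup_{x<y} |G(x) − G(y)|`. -/
noncomputable def normBc (G : ℝ → ℝ) : ℝ :=
  sSup {r : ℝ | ∃ x y : ℝ, x < y ∧ r = |G x - G y|}

/-- Heat convolution in the weighted space `A_{c,τ}`: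
`u(x,t) = −∫ G(ξ) ∂/∂ξ [ e^{ξ²/(4τ)} Θ_t(x−ξ) ] dξ`. -/
noncomputable def wConv (G : ℝ → ℝ) (τ t x : ℝ) : ℝ :=
  -∫ ξ : ℝ, G ξ * deriv (fun η : ℝ => Real.exp (η ^ 2 / (4 * τ)) * heatK t (x - η)) ξ

/-!
Completing the square, `e^{η²/(4τ)} Θ_t(x - η)` is `e^{x²/(4(τ-t))} / (2√(πt))` times the
Gaussian `e^{-a(η-p)²}` with `a = (τ-t)/(4tτ)` and `p = xτ/(τ-t)`. Hence
`u(x,t) e^{-x²/(4(τ-t))} = (2√(πt))⁻¹ ∫ G(p + s) k(s) ds` with `k = -(e^{-as²})'`.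
The kernel `k` is positive on `s > 0`, negative on `s < 0` and has mass `±1` on the two
half-lines, so the integral is bounded by the oscillation `‖G‖'_∞` of `G` across `p`. Since
`∫ k = 0`, dominated convergence sends it to `(lim G) · 0 = 0` as `p → ±∞`.
-/

open Set Bornology

noncomputable def negDerivGaussian (a s : ℝ) : ℝ := 2 * a * s * Real.exp (-a * s ^ 2)

section NegDerivGaussian

variable {a : ℝ}

lemma hasDerivAt_neg_exp_neg_mul_sq (a s : ℝ) :
    HasDerivAt (fun s => -Real.exp (-a * s ^ 2)) (negDerivGaussian a s) s := by
  refine ((hasDerivAt_pow 2 s).const_mul (-a)).exp.neg.congr_deriv ?_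
  unfold negDerivGaussian
  ring

lemma tendsto_exp_neg_mul_sq_atTop (ha : 0 < a) :
    Tendsto (fun s : ℝ => Real.exp (-a * s ^ 2)) atTop (𝓝 0) :=
  Real.tendsto_exp_atBot.comp
    ((tendsto_pow_atTop two_ne_zero).const_mul_atTop_of_neg (neg_lt_zero.2 ha))

lemma tendsto_exp_neg_mul_sq_atBot (ha : 0 < a) :
    Tendsto (fun s : ℝ => Real.exp (-a * s ^ 2)) atBot (𝓝 0) := by
  simpa [Function.comp_def] using (tendsto_exp_neg_mul_sq_atTop ha).comp tendsto_neg_atBot_atTop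

lemma integrable_negDerivGaussian (ha : 0 < a) : Integrable (negDerivGaussian a) := by
  convert (integrable_mul_exp_neg_mul_sq ha).const_mul (2 * a) using 2 with s
  simp only [negDerivGaussian]
  ring

lemma integral_Ioi_negDerivGaussian (ha : 0 < a) : ∫ s in Ioi 0, negDerivGaussian a s = 1 := by
  simpa using integral_Ioi_of_hasDerivAt_of_tendsto' (a := 0)
    (fun s _ => hasDerivAt_neg_exp_neg_mul_sq a s) (integrable_negDerivGaussian ha).integrableOn
    (tendsto_exp_neg_mul_sq_atTop ha).neg

lemma integral_Iic_negDerivGaussian (ha : 0 < a) : ∫ s in Iic 0, negDerivGaussian a s = -1 := by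
  simpa using integral_Iic_of_hasDerivAt_of_tendsto' (a := 0)
    (fun s _ => hasDerivAt_neg_exp_neg_mul_sq a s) (integrable_negDerivGaussian ha).integrableOn
    (tendsto_exp_neg_mul_sq_atBot ha).neg

lemma integral_negDerivGaussian (ha : 0 < a) : ∫ s, negDerivGaussian a s = 0 := by
  rw [← intervalIntegral.integral_Iic_add_Ioi (integrable_negDerivGaussian ha).integrableOn
    (integrable_negDerivGaussian ha).integrableOn, integral_Iic_negDerivGaussian ha,
    integral_Ioi_negDerivGaussian ha]
  norm_num

lemma negDerivGaussian_nonneg (ha : 0 < a) {s : ℝ} (hs : 0 ≤ s) :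
    0 ≤ negDerivGaussian a s := by
  unfold negDerivGaussian
  positivity

lemma negDerivGaussian_nonpos (ha : 0 < a) {s : ℝ} (hs : s ≤ 0) : negDerivGaussian a s ≤ 0 :=
  mul_nonpos_of_nonpos_of_nonneg (mul_nonpos_of_nonneg_of_nonpos (by positivity) hs)
    (Real.exp_pos _).le

end NegDerivGaussian

section SignChangingKernel

variable {g k : ℝ → ℝ} {M : ℝ}

/- Comparing `g` on each half-line with its values on the other one: the part of the integral
over `Ioi 0` is at most `g η + M` for every `η ≤ 0`, which bounds the part over `Iic 0`. -/
lemma integral_mul_le_of_sub_le (hgk : Integrable fun s => g s * k s) (hk : Integrable k)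
    (hk_Ioi : ∀ s, 0 < s → 0 ≤ k s) (hk_Iic : ∀ s ≤ 0, k s ≤ 0)
    (h_Ioi : ∫ s in Ioi 0, k s = 1) (h_Iic : ∫ s in Iic 0, k s = -1)
    (hg : ∀ η ≤ 0, ∀ ξ, 0 < ξ → g ξ - g η ≤ M) :
    ∫ s, g s * k s ≤ M := by
  set I := ∫ s in Ioi 0, g s * k s
  have hI : ∀ η ≤ 0, I ≤ g η + M := fun η hη => by
    calc I ≤ ∫ s in Ioi 0, (g η + M) * k s :=
          setIntegral_mono_on hgk.integrableOn (hk.const_mul _).integrableOn measurableSet_Ioi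
            fun s hs => mul_le_mul_of_nonneg_right (by linarith [hg η hη s hs]) (hk_Ioi s hs)
      _ = g η + M := by rw [integral_const_mul, h_Ioi, mul_one]
  have hJ : ∫ s in Iic 0, g s * k s ≤ M - I := by
    calc ∫ s in Iic 0, g s * k s ≤ ∫ s in Iic 0, (I - M) * k s :=
          setIntegral_mono_on hgk.integrableOn (hk.const_mul _).integrableOn measurableSet_Iic
            fun s hs => mul_le_mul_of_nonpos_right (by linarith [hI s hs]) (hk_Iic s hs)
      _ = M - I := by rw [integral_const_mul, h_Iic]; ring
  rw [← intervalIntegral.integral_Iic_add_Ioi hgk.integrableOn hgk.integrableOn]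
  linarith

lemma abs_integral_mul_le_of_abs_sub_le (hgk : Integrable fun s => g s * k s) (hk : Integrable k)
    (hk_Ioi : ∀ s, 0 < s → 0 ≤ k s) (hk_Iic : ∀ s ≤ 0, k s ≤ 0)
    (h_Ioi : ∫ s in Ioi 0, k s = 1) (h_Iic : ∫ s in Iic 0, k s = -1)
    (hg : ∀ η ≤ 0, ∀ ξ, 0 < ξ → |g η - g ξ| ≤ M) :
    |∫ s, g s * k s| ≤ M := by
  have hle := integral_mul_le_of_sub_le (M := M) hgk hk hk_Ioi hk_Iic h_Ioi h_Iic
    fun η hη ξ hξ => by linarith [abs_le.1 (hg η hη ξ hξ)]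
  have hge := integral_mul_le_of_sub_le (g := fun s => -g s) (M := M) (by simpa using hgk.neg)
    hk hk_Ioi hk_Iic h_Ioi h_Iic fun η hη ξ hξ => by linarith [abs_le.1 (hg η hη ξ hξ)]
  simp only [neg_mul, integral_neg] at hge
  exact abs_le.2 ⟨by linarith, hle⟩

end SignChangingKernel

section Translates

variable {g k : ℝ → ℝ}

lemma integrable_comp_add_mul (hg : Measurable g) (hg_bdd : IsBounded (range g))
    (hk : Integrable k) (p : ℝ) : Integrable fun s => g (p + s) * k s := by
  obtain ⟨C, hC⟩ := isBounded_iff_forall_norm_le.1 hg_bdd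
  exact hk.bdd_mul (hg.comp (measurable_const_add p)).aestronglyMeasurable
    (Eventually.of_forall fun s => hC _ (mem_range_self _))

lemma tendsto_integral_comp_add_mul {α : Type*} {l : Filter α} [l.IsCountablyGenerated]
    {f : α → ℝ} {L : ℝ} (hg : Measurable g) (hg_bdd : IsBounded (range g))
    (hk : Integrable k) (hlim : ∀ s, Tendsto (fun x => g (f x + s)) l (𝓝 L)) :
    Tendsto (fun x => ∫ s, g (f x + s) * k s) l (𝓝 (L * ∫ s, k s)) := by
  obtain ⟨C, hC⟩ := isBounded_iff_forall_norm_le.1 hg_bdd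
  rw [← integral_const_mul]
  refine tendsto_integral_filter_of_dominated_convergence (fun s => C * ‖k s‖)
    (Eventually.of_forall fun x =>
      (integrable_comp_add_mul hg hg_bdd hk (f x)).aestronglyMeasurable)
    (Eventually.of_forall fun x => Eventually.of_forall fun s => ?_) (hk.norm.const_mul C)
    (Eventually.of_forall fun s => (hlim s).mul_const _)
  rw [norm_mul]
  exact mul_le_mul_of_nonneg_right (hC _ (mem_range_self _)) (norm_nonneg _)

end Translates

lemma abs_sub_le_normBc {g : ℝ → ℝ} (hg : IsBounded (range g)) {x y : ℝ} (hxy : x < y) :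
    |g x - g y| ≤ normBc g := by
  obtain ⟨C, hC⟩ := Metric.isBounded_range_iff.1 hg
  exact le_csSup ⟨C, by rintro r ⟨u, v, -, rfl⟩; exact hC u v⟩ ⟨x, y, hxy, rfl⟩

lemma memBc.isBounded_range {G : ℝ → ℝ} (hG : memBc G) : IsBounded (range G) := by
  obtain ⟨hc, hbot, L, htop⟩ := hG
  exact hc.isBounded_range_iff_isBigO_atTop_atBot.2 ⟨htop.isBigO_one ℝ, hbot.isBigO_one ℝ⟩

lemma abs_integral_comp_add_mul_negDerivGaussian_le {a : ℝ} (ha : 0 < a) {g : ℝ → ℝ}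
    (hg : Measurable g) (hg_bdd : IsBounded (range g)) (p : ℝ) :
    |∫ s, g (p + s) * negDerivGaussian a s| ≤ normBc g :=
  abs_integral_mul_le_of_abs_sub_le (integrable_comp_add_mul hg hg_bdd
    (integrable_negDerivGaussian ha) p) (integrable_negDerivGaussian ha)
    (fun _ hs => negDerivGaussian_nonneg ha hs.le) (fun _ hs => negDerivGaussian_nonpos ha hs)
    (integral_Ioi_negDerivGaussian ha) (integral_Iic_negDerivGaussian ha)
    fun _ hη _ hξ => abs_sub_le_normBc hg_bdd (by linarith)

section HeatKernel

variable {τ t : ℝ}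

/- Completing the square in `η` in `η²/(4τ) - (x - η)²/(4t)`. -/
lemma exp_mul_heatK_eq (ht : t ≠ 0) (hτ : τ ≠ 0) (hτt : τ - t ≠ 0) (x η : ℝ) :
    Real.exp (η ^ 2 / (4 * τ)) * heatK t (x - η) =
      Real.exp (x ^ 2 / (4 * (τ - t))) / (2 * Real.sqrt (Real.pi * t)) *
        Real.exp (-((τ - t) / (4 * t * τ)) * (η - x * τ / (τ - t)) ^ 2) := by
  have hsqrt : Real.sqrt (4 * Real.pi * t) = 2 * Real.sqrt (Real.pi * t) := by
    rw [mul_assoc, Real.sqrt_mul zero_le_four, show (4 : ℝ) = 2 ^ 2 by norm_num,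
      Real.sqrt_sq zero_le_two]
  have hexp : η ^ 2 / (4 * τ) + -(x - η) ^ 2 / (4 * t) =
      x ^ 2 / (4 * (τ - t)) + -((τ - t) / (4 * t * τ)) * (η - x * τ / (τ - t)) ^ 2 := by
    field_simp
    ring
  rw [heatK, hsqrt, mul_left_comm, ← Real.exp_add, hexp, Real.exp_add]
  ring

lemma wConv_eq (ht : t ≠ 0) (hτ : τ ≠ 0) (hτt : τ - t ≠ 0) (G : ℝ → ℝ) (x : ℝ) :
    wConv G τ t x = Real.exp (x ^ 2 / (4 * (τ - t))) / (2 * Real.sqrt (Real.pi * t)) *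
      ∫ s, G (x * τ / (τ - t) + s) * negDerivGaussian ((τ - t) / (4 * t * τ)) s := by
  set K := Real.exp (x ^ 2 / (4 * (τ - t))) / (2 * Real.sqrt (Real.pi * t))
  set a := (τ - t) / (4 * t * τ)
  set p := x * τ / (τ - t)
  have hderiv (ξ : ℝ) : deriv (fun η => Real.exp (η ^ 2 / (4 * τ)) * heatK t (x - η)) ξ =
      -(K * negDerivGaussian a (ξ - p)) := by
    have h : HasDerivAt (fun η => K * Real.exp (-a * (η - p) ^ 2))
        (-(K * negDerivGaussian a (ξ - p))) ξ := by
      simpa only [mul_neg, neg_mul, neg_neg] using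
        ((hasDerivAt_neg_exp_neg_mul_sq a (ξ - p)).comp_sub_const ξ p).const_mul (-K)
    rw [funext (exp_mul_heatK_eq ht hτ hτt x)]
    exact h.deriv
  have hshift :
      ∫ ξ, G ξ * negDerivGaussian a (ξ - p) = ∫ s, G (p + s) * negDerivGaussian a s := by
    simpa using (integral_add_left_eq_self (fun ξ => G ξ * negDerivGaussian a (ξ - p)) p).symm
  simp_rw [wConv, hderiv, mul_neg, integral_neg, neg_neg, mul_left_comm (G _), integral_const_mul,
    hshift]

end HeatKernel

theorem stmt15_general (τ : ℝ) (G : ℝ → ℝ) (hG : memBc G)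
    (t : ℝ) (ht : 0 < t) (htτ : t < τ) :
    (∀ x : ℝ, |wConv G τ t x|
      ≤ normBc G * Real.exp (x ^ 2 / (4 * (τ - t))) / (2 * Real.sqrt (Real.pi * t))) ∧
    Tendsto (fun x : ℝ => wConv G τ t x * Real.exp (-x ^ 2 / (4 * (τ - t))))
      atTop (nhds 0) ∧
    Tendsto (fun x : ℝ => wConv G τ t x * Real.exp (-x ^ 2 / (4 * (τ - t))))
      atBot (nhds 0) := by
  have hτt : 0 < τ - t := sub_pos.2 htτ
  have hτ : 0 < τ := ht.trans htτ
  have ha : 0 < (τ - t) / (4 * t * τ) := by positivity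
  have hGm : Measurable G := hG.1.measurable
  have hG_bdd := hG.isBounded_range
  obtain ⟨-, hG_bot, L, hG_top⟩ := hG
  set I := fun x => ∫ s, G (x * τ / (τ - t) + s) * negDerivGaussian ((τ - t) / (4 * t * τ)) s
  have hrep (x : ℝ) : wConv G τ t x =
      Real.exp (x ^ 2 / (4 * (τ - t))) / (2 * Real.sqrt (Real.pi * t)) * I x :=
    wConv_eq ht.ne' hτ.ne' hτt.ne' G x
  have hweighted (x : ℝ) : wConv G τ t x * Real.exp (-x ^ 2 / (4 * (τ - t))) =
      (2 * Real.sqrt (Real.pi * t))⁻¹ * I x := by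
    rw [hrep, neg_div, Real.exp_neg]
    field_simp
  have hlim {l : Filter ℝ} [l.IsCountablyGenerated] {L' : ℝ} (hG_lim : Tendsto G l (𝓝 L'))
      (hshift : ∀ s, Tendsto (fun x => x * τ / (τ - t) + s) l l) :
      Tendsto (fun x => wConv G τ t x * Real.exp (-x ^ 2 / (4 * (τ - t)))) l (𝓝 0) := by
    have h := (tendsto_integral_comp_add_mul hGm hG_bdd (integrable_negDerivGaussian ha)
      fun s => hG_lim.comp (hshift s)).const_mul (2 * Real.sqrt (Real.pi * t))⁻¹
    rw [integral_negDerivGaussian ha, mul_zero, mul_zero] at h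
    simpa only [hweighted] using h
  refine ⟨fun x => ?_, hlim hG_top fun s => ?_, hlim hG_bot fun s => ?_⟩
  · rw [hrep, abs_mul, abs_of_pos (by positivity), mul_comm, ← mul_div_assoc]
    gcongr
    exact abs_integral_comp_add_mul_negDerivGaussian_le ha hGm hG_bdd _
  · exact tendsto_atTop_add_const_right _ s ((tendsto_id.atTop_mul_const hτ).atTop_div_const hτt)
  · exact tendsto_atBot_add_const_right _ s ((tendsto_id.atBot_mul_const hτ).atBot_div_const hτt)

/-- `|u(x,t)| ≤ ‖G‖'_∞ e^{x²/(4(τ−t))}/(2√(πt))` for every `x`, and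
`u(x,t) e^{−x²/(4(τ−t))} → 0` as `|x| → ∞`. -/
theorem stmt15 (τ : ℝ) (hτ : 0 < τ) (G : ℝ → ℝ) (hG : memBc G)
    (t : ℝ) (ht : 0 < t) (htτ : t < τ) :
    (∀ x : ℝ, |wConv G τ t x|
      ≤ normBc G * Real.exp (x ^ 2 / (4 * (τ - t))) / (2 * Real.sqrt (Real.pi * t))) ∧
    Tendsto (fun x : ℝ => wConv G τ t x * Real.exp (-x ^ 2 / (4 * (τ - t))))
      atTop (nhds 0) ∧
    Tendsto (fun x : ℝ => wConv G τ t x * Real.exp (-x ^ 2 / (4 * (τ - t))))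
      atBot (nhds 0) :=
  stmt15_general τ G hG t ht htτ
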